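/- arXiv:2502.10180 — 5 statements merged into one kernel-verified Lean document; each statement's English description precedes it below -/
import Mathlib

section
/- Let d : [0,∞) → ℝ be C² with d(t) > 0 for all t, satisfying d̈ = -k·(ḋ/d) - α(t) with k > 0 and α continuous and bounded. If d(t) → 0 as t → ∞, then ∫₀ᵀ α(τ) dτ → +∞ as T → ∞. -/
open Real Filter Set

/-! Along a solution, `ḋ + k log d` has derivative `-α`, so
`∫₀ᵀ α = ḋ(0) - ḋ(T) - k log (d(T) / d(0))`. Since `d` is bounded and `α ≥ -M`, the equation
forces `d̈ < 0` as soon as `ḋ` reaches the level `(M + 1) sup d / k`, so `ḋ` is bounded above;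
and `log d(T) → -∞`. -/

lemma bddAbove_image_Ici_of_tendsto {f : ℝ → ℝ} {a l : ℝ} (hf : ContinuousOn f (Ici a))
    (hlim : Tendsto f atTop (nhds l)) : BddAbove (f '' Ici a) := by
  obtain ⟨T, hT⟩ := eventually_atTop.1 (hlim.eventually (eventually_le_nhds (lt_add_one l)))
  have hcover : Ici a ⊆ Icc a (max a T) ∪ Ici (max a T) := fun x hx => by
    rcases le_total x (max a T) with h | h
    exacts [Or.inl ⟨hx, h⟩, Or.inr h]
  have htail : BddAbove (f '' Ici (max a T)) :=
    ⟨l + 1, by rintro _ ⟨x, hx, rfl⟩; exact hT x (le_of_max_le_right hx)⟩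
  refine BddAbove.mono (image_mono hcover) ?_
  rw [image_union]
  exact (isCompact_Icc.bddAbove_image (hf.mono Icc_subset_Ici_self)).union htail

lemma image_le_of_deriv_neg_on_level {f : ℝ → ℝ} {a B : ℝ} (hf : Differentiable ℝ f)
    (ha : f a ≤ B) (hB : ∀ x ≥ a, f x = B → deriv f x < 0) : ∀ x ≥ a, f x ≤ B := fun _ hx =>
  image_le_of_deriv_right_lt_deriv_boundary' (B := fun _ => B) (B' := 0)
    hf.continuous.continuousOn (fun y _ => (hf y).hasDerivAt.hasDerivWithinAt) ha
    continuousOn_const (fun _ _ => hasDerivWithinAt_const _ _ _) (fun y hy => hB y hy.1)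
    ⟨hx, le_rfl⟩

section ODE

variable {d α : ℝ → ℝ} {k : ℝ}

lemma mul_log_div_eq_of_ode (hd1 : Differentiable ℝ d) (hd2 : Differentiable ℝ (deriv d))
    (hpos : ∀ t ≥ 0, 0 < d t)
    (hode : ∀ t ≥ 0, deriv (deriv d) t = -k * (deriv d t / d t) - α t)
    {T : ℝ} (hT : 0 ≤ T) (hα : IntervalIntegrable α MeasureTheory.volume 0 T) :
    k * log (d T / d 0) = deriv d 0 - deriv d T - ∫ τ in (0:ℝ)..T, α τ := by
  have hw : ∀ t ∈ uIcc 0 T, HasDerivAt (fun s => deriv d s + k * log (d s)) (-α t) t := by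
    intro t ht
    rw [uIcc_of_le hT] at ht
    have h : HasDerivAt (fun s => deriv d s + k * log (d s))
        (deriv (deriv d) t + k * (deriv d t / d t)) t :=
      (hd2 t).hasDerivAt.add (((hd1 t).hasDerivAt.log (hpos t ht.1).ne').const_mul k)
    convert h using 1
    rw [hode t ht.1]
    ring
  have hint := intervalIntegral.integral_eq_sub_of_hasDerivAt hw hα.neg
  rw [intervalIntegral.integral_neg] at hint
  rw [log_div (hpos T hT).ne' (hpos 0 le_rfl).ne']
  linarith

lemma deriv_le_of_ode (hk : 0 < k) (hd2 : Differentiable ℝ (deriv d))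
    (hpos : ∀ t ≥ 0, 0 < d t) {D M : ℝ} (hD : ∀ t ≥ 0, d t ≤ D) (hM : 0 ≤ M)
    (hα : ∀ t ≥ 0, -M ≤ α t)
    (hode : ∀ t ≥ 0, deriv (deriv d) t = -k * (deriv d t / d t) - α t) :
    ∀ t ≥ 0, deriv d t ≤ max (deriv d 0) ((M + 1) * D / k) := by
  refine image_le_of_deriv_neg_on_level hd2 (le_max_left _ _) fun t ht heq => ?_
  have hD0 : 0 < D := (hpos 0 le_rfl).trans_le (hD 0 le_rfl)
  have hlevel : (M + 1) * D / k ≤ deriv d t := heq ▸ le_max_right _ _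
  have hderiv0 : 0 ≤ deriv d t := le_trans (by positivity) hlevel
  have hdamp : M + 1 ≤ k * (deriv d t / d t) :=
    calc M + 1 = k * ((M + 1) * D / k / D) := by field_simp
      _ ≤ k * (deriv d t / D) := by gcongr
      _ ≤ k * (deriv d t / d t) := by gcongr; exacts [hpos t ht, hD t ht]
  rw [hode t ht]
  linarith [hα t ht]

end ODE

/-- If d > 0 everywhere, satisfies d̈ = -k(ḋ/d) - α with k > 0 and α
continuous and bounded, and d(t) → 0 as t → ∞, then ∫₀ᵀ α → +∞. -/
theorem stmt_1
    (d α : ℝ → ℝ) (k : ℝ) (hk : 0 < k)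
    (hd : ContDiff ℝ 2 d)
    (hpos : ∀ t ≥ (0:ℝ), d t > 0)
    (hα_cont : Continuous α)
    (hα_bdd : ∃ M : ℝ, ∀ t ≥ (0:ℝ), |α t| ≤ M)
    (hode : ∀ t ≥ (0:ℝ),
      deriv (deriv d) t = -k * (deriv d t / d t) - α t)
    (hlim : Tendsto d atTop (nhds 0)) :
    Tendsto (fun T => ∫ τ in (0:ℝ)..T, α τ) atTop atTop := by
  obtain ⟨M, hM⟩ := hα_bdd
  have hd1 : Differentiable ℝ d := hd.differentiable two_ne_zero
  have hd2 : Differentiable ℝ (deriv d) := hd.differentiable_deriv_two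
  obtain ⟨D, hD⟩ := bddAbove_image_Ici_of_tendsto hd1.continuous.continuousOn hlim
  have hderiv := deriv_le_of_ode hk hd2 hpos (fun t ht => hD ⟨t, ht, rfl⟩)
    ((abs_nonneg _).trans (hM 0 le_rfl)) (fun t ht => neg_le_of_abs_le (hM t ht)) hode
  have hratio : Tendsto (fun T => d T / d 0) atTop (nhdsWithin 0 (Ioi 0)) :=
    tendsto_nhdsWithin_iff.2 ⟨by simpa using hlim.div_const (d 0),
      eventually_atTop.2 ⟨0, fun t ht => div_pos (hpos t ht) (hpos 0 le_rfl)⟩⟩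
  have hlower := tendsto_atTop_add_const_left _ (deriv d 0 - max (deriv d 0) ((M + 1) * D / k))
    (tendsto_neg_atBot_atTop.comp ((tendsto_log_nhdsGT_zero.comp hratio).const_mul_atBot hk))
  refine tendsto_atTop_mono' _ ?_ hlower
  filter_upwards [eventually_ge_atTop 0] with T hT
  have hid := mul_log_div_eq_of_ode hd1 hd2 hpos hode hT (hα_cont.intervalIntegrable 0 T)
  simp only [Function.comp_apply]
  linarith [hderiv T hT]
end

section
/- Consider the system ė = ν, ν̇ = -k₄e - k₅ν - k₆·ν/d with d = e + c > 0, positive gains k₄, k₅, k₆, and c > 0. For any initial condition with d(0) > 0, d(t) remains positive for all t ≥ 0. -/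
/-!
Along the solution the energy `k₄ e² / 2 + ν² / 2` is nonincreasing as long as `d = e + c > 0`,
because the term `k₆ ν / d` only adds damping; so `e` and `ν` stay bounded. On the other hand
`k₆ log d + ν + k₅ e` has derivative `-k₄ e`, which is bounded, so `log d` is bounded below on any
finite interval where `d > 0`. Hence `d` cannot reach `0` at a first time `T`.
-/

open Real Set

theorem exists_first_nonpos {d : ℝ → ℝ} (hd : Continuous d) {a b : ℝ} (ha : 0 < d a)
    (hab : a ≤ b) (hb : d b ≤ 0) : ∃ T, a < T ∧ d T ≤ 0 ∧ ∀ t ∈ Ico a T, 0 < d t := by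
  set S := Icc a b ∩ {t | d t ≤ 0}
  have hS : IsCompact S := isCompact_Icc.inter_right (isClosed_le hd continuous_const)
  have hSne : S.Nonempty := ⟨b, ⟨hab, le_rfl⟩, hb⟩
  obtain ⟨⟨haT, hTb⟩, hdT⟩ := hS.sInf_mem hSne
  refine ⟨sInf S, haT.lt_of_ne ?_, hdT, fun t ht => ?_⟩
  · intro h
    exact hdT.not_gt (h ▸ ha)
  · by_contra! hdt
    exact ht.2.not_ge (csInf_le hS.bddBelow ⟨⟨ht.1, ht.2.le.trans hTb⟩, hdt⟩)

noncomputable def oscillatorEnergy (k : ℝ) (e ν : ℝ → ℝ) (t : ℝ) : ℝ :=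
  k / 2 * e t ^ 2 + ν t ^ 2 / 2

section Oscillator

variable {e ν γ : ℝ → ℝ} {k : ℝ}

theorem oscillatorEnergy_antitoneOn {s : Set ℝ} (hs : Convex ℝ s)
    (he : ∀ t ∈ s, HasDerivAt e (ν t) t)
    (hν : ∀ t ∈ s, HasDerivAt ν (-k * e t - γ t * ν t) t)
    (hγ : ∀ t ∈ interior s, 0 ≤ γ t) :
    AntitoneOn (oscillatorEnergy k e ν) s := by
  have hE : ∀ t ∈ s, HasDerivAt (oscillatorEnergy k e ν) (-(γ t * ν t ^ 2)) t := by
    intro t ht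
    refine ((((he t ht).pow 2).const_mul (k / 2)).add (((hν t ht).pow 2).div_const 2)).congr_deriv ?_
    ring
  refine antitoneOn_of_deriv_nonpos hs (HasDerivAt.continuousOn hE)
    (fun t ht => (hE t (interior_subset ht)).differentiableAt.differentiableWithinAt)
    (fun t ht => ?_)
  rw [(hE t (interior_subset ht)).deriv, neg_nonpos]
  exact mul_nonneg (hγ t ht) (sq_nonneg _)

theorem abs_le_sqrt_of_oscillatorEnergy_le (hk : 0 < k) {t E : ℝ}
    (h : oscillatorEnergy k e ν t ≤ E) : |e t| ≤ √(2 * E / k) ∧ |ν t| ≤ √(2 * E) := by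
  unfold oscillatorEnergy at h
  refine ⟨abs_le_sqrt ?_, abs_le_sqrt ?_⟩
  · rw [le_div_iff₀ hk]
    nlinarith [sq_nonneg (ν t)]
  · nlinarith [mul_nonneg hk.le (sq_nonneg (e t))]

end Oscillator

section LogBarrier

variable {d ν ν' : ℝ → ℝ} {k K a b : ℝ}

theorem log_barrier_monotoneOn (hd : ∀ t ∈ Ico a b, HasDerivAt d (ν t) t)
    (hν : ∀ t ∈ Ico a b, HasDerivAt ν (ν' t) t) (hpos : ∀ t ∈ Ico a b, 0 < d t)
    (hK : ∀ t ∈ Ico a b, -K ≤ ν' t + k * ν t / d t) :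
    MonotoneOn (fun t => k * log (d t) + ν t + K * t) (Ico a b) := by
  have hG : ∀ t ∈ Ico a b,
      HasDerivAt (fun t => k * log (d t) + ν t + K * t) (k * (ν t / d t) + ν' t + K) t := by
    intro t ht
    exact ((((hd t ht).log (hpos t ht).ne').const_mul k).add (hν t ht)).add
      ((hasDerivAt_id t).const_mul K |>.congr_deriv (mul_one K))
  refine monotoneOn_of_deriv_nonneg (convex_Ico a b) (HasDerivAt.continuousOn hG)
    (fun t ht => (hG t (interior_subset ht)).differentiableAt.differentiableWithinAt)
    (fun t ht => ?_)
  rw [(hG t (interior_subset ht)).deriv, mul_div_assoc']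
  linarith [hK t (interior_subset ht)]

theorem pos_of_log_barrier (hk : 0 < k) (hK : 0 ≤ K) (hab : a < b) {M : ℝ}
    (hd : ∀ t ∈ Icc a b, HasDerivAt d (ν t) t)
    (hν : ∀ t ∈ Ico a b, HasDerivAt ν (ν' t) t) (hpos : ∀ t ∈ Ico a b, 0 < d t)
    (hK' : ∀ t ∈ Ico a b, -K ≤ ν' t + k * ν t / d t) (hM : ∀ t ∈ Ico a b, ν t ≤ M) :
    0 < d b := by
  set B := (k * log (d a) + ν a - M - K * (b - a)) / k
  have hlower : ∀ t ∈ Ico a b, exp B ≤ d t := by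
    intro t ht
    have hmono := log_barrier_monotoneOn (fun t ht => hd t (Ico_subset_Icc_self ht)) hν hpos hK'
      (left_mem_Ico.2 hab) ht ht.1
    have hKt : K * (t - a) ≤ K * (b - a) := mul_le_mul_of_nonneg_left (by linarith [ht.2]) hK
    have hB : B ≤ log (d t) := by
      rw [div_le_iff₀' hk]
      linarith [hM t ht]
    calc exp B ≤ exp (log (d t)) := exp_le_exp.2 hB
      _ = d t := exp_log (hpos t ht)
  have hcont : ContinuousWithinAt d (Ico a b) b :=
    (hd b (right_mem_Icc.2 hab.le)).continuousAt.continuousWithinAt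
  exact (exp_pos B).trans_le <| continuousWithinAt_const.closure_le
    (by rw [closure_Ico hab.ne]; exact right_mem_Icc.2 hab.le) hcont hlower

end LogBarrier

theorem stmt_3_general
    (e ν : ℝ → ℝ) (k₄ k₅ k₆ c : ℝ)
    (hk₄ : 0 < k₄) (hk₅ : 0 < k₅) (hk₆ : 0 < k₆)
    (he : ∀ t, HasDerivAt e (ν t) t)
    (hν : ∀ t, HasDerivAt ν
      (-k₄ * e t - k₅ * ν t - k₆ * ν t / (e t + c)) t)
    (h0 : e 0 + c > 0) :
    ∀ t ≥ (0:ℝ), e t + c > 0 := by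
  intro t₁ ht₁
  by_contra! hneg
  set d : ℝ → ℝ := fun t => e t + c
  have hd : ∀ t, HasDerivAt d (ν t) t := fun t => (he t).add_const c
  obtain ⟨T, hT, hdT, hpos⟩ := exists_first_nonpos
    (continuous_iff_continuousAt.2 fun t => (hd t).continuousAt) h0 ht₁ hneg
  have hdamped : ∀ t ∈ Icc 0 T, HasDerivAt ν (-k₄ * e t - (k₅ + k₆ / d t) * ν t) t :=
    fun t _ => (hν t).congr_deriv (by ring)
  have henergy := oscillatorEnergy_antitoneOn (convex_Icc 0 T) (fun t _ => he t) hdamped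
    (fun t ht => by rw [interior_Icc] at ht; have := hpos t (Ioo_subset_Ico_self ht); positivity)
  set E₀ := oscillatorEnergy k₄ e ν 0
  have hbound : ∀ t ∈ Ico 0 T, e t ≤ √(2 * E₀ / k₄) ∧ ν t ≤ √(2 * E₀) := fun t ht =>
    have h := abs_le_sqrt_of_oscillatorEnergy_le hk₄
      (henergy (left_mem_Icc.2 hT.le) (Ico_subset_Icc_self ht) ht.1)
    ⟨(le_abs_self _).trans h.1, (le_abs_self _).trans h.2⟩
  have hforcing : ∀ t ∈ Ico 0 T,
      -(k₄ * √(2 * E₀ / k₄) + k₅ * √(2 * E₀)) ≤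
        (-k₄ * e t - k₅ * ν t - k₆ * ν t / d t) + k₆ * ν t / d t := fun t ht => by
    nlinarith [hbound t ht]
  exact hdT.not_gt (pos_of_log_barrier hk₆ (by positivity) hT (fun t _ => hd t)
    (fun t _ => hν t) hpos hforcing (fun t ht => (hbound t ht).2))

/-- For the system ė = ν, ν̇ = -k₄e - k₅ν - k₆ν/(e+c) with positive gains
and c > 0, if d = e + c satisfies d(0) > 0 then d(t) > 0 for all t ≥ 0. -/
theorem stmt_3
    (e ν : ℝ → ℝ) (k₄ k₅ k₆ c : ℝ)
    (hk₄ : 0 < k₄) (hk₅ : 0 < k₅) (hk₆ : 0 < k₆) (hc : 0 < c)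
    (he : ∀ t, HasDerivAt e (ν t) t)
    (hν : ∀ t, HasDerivAt ν
      (-k₄ * e t - k₅ * ν t - k₆ * ν t / (e t + c)) t)
    (h0 : e 0 + c > 0) :
    ∀ t ≥ (0:ℝ), e t + c > 0 :=
  stmt_3_general e ν k₄ k₅ k₆ c hk₄ hk₅ hk₆ he hν h0
end

section
/- Consider the lateral error dynamics ỹ' = sin θ̃, θ̃' = -k₁·ỹ·(sin θ̃)/θ̃ - k₂·θ̃ - k₃·(1/d_L + 1/d_R)·sin θ̃, where d_L = w - ỹ - ε_w, d_R = w + ỹ - ε_w with w > ε_w > 0, and k₁, k₂, k₃ > 0. Then along trajectories with d_L > 0, d_R > 0, and |θ̃| ≤ π/2, the function L = (1/2)k₁ỹ² + (1/2)θ̃² satisfies L' = -k₂θ̃² - k₃(1/d_L + 1/d_R)·θ̃·sin θ̃ ≤ 0. -/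
open Real

/-!
Differentiating `L = ½k₁ỹ² + ½θ̃²` along the flow, the coupling term `k₁ ỹ sin θ̃` coming from
`ỹ' = sin θ̃` cancels against `θ̃ · (-k₁ ỹ sin θ̃ / θ̃)`, leaving `-k₂θ̃² - g θ̃ sin θ̃` with the
nonnegative barrier gain `g = k₃(1/d_L + 1/d_R)`. Both remaining terms are nonpositive because
`θ̃` and `sin θ̃` have the same sign on `[-π, π]`.
-/

namespace Real

lemma mul_sin_nonneg_of_abs_le_pi {x : ℝ} (hx : |x| ≤ π) : 0 ≤ x * sin x := by
  obtain ⟨hlo, hhi⟩ := abs_le.mp hx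
  rcases le_total 0 x with hpos | hneg
  · exact mul_nonneg hpos (sin_nonneg_of_nonneg_of_le_pi hpos hhi)
  · exact mul_nonneg_of_nonpos_of_nonpos hneg (sin_nonpos_of_nonpos_of_neg_pi_le hneg hlo)

/-- At `x = 0` both sides vanish, since `sin 0 / 0 = 0` and `sin 0 = 0`. -/
lemma mul_sin_div_self (x : ℝ) : x * (sin x / x) = sin x :=
  mul_div_cancel_of_imp' fun hx => by rw [hx, sin_zero]

end Real

lemma hasDerivAt_lateralLyapunov {y θ : ℝ → ℝ} {k₁ k₂ g t : ℝ}
    (hy : HasDerivAt y (sin (θ t)) t)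
    (hθ : HasDerivAt θ (-k₁ * y t * (sin (θ t) / θ t) - k₂ * θ t - g * sin (θ t)) t) :
    HasDerivAt (fun t => (1/2) * k₁ * (y t)^2 + (1/2) * (θ t)^2)
      (-k₂ * (θ t)^2 - g * θ t * sin (θ t)) t := by
  refine (((hy.pow 2).const_mul ((1/2) * k₁)).add ((hθ.pow 2).const_mul (1/2))).congr_deriv ?_
  linear_combination -k₁ * y t * mul_sin_div_self (θ t)

lemma lateralLyapunov_dissipation_nonpos {k₂ g x : ℝ} (hk₂ : 0 ≤ k₂) (hg : 0 ≤ g)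
    (hx : |x| ≤ π) : -k₂ * x^2 - g * x * sin x ≤ 0 := by
  have hsq : 0 ≤ k₂ * x^2 := by positivity
  have hbarrier : 0 ≤ g * (x * sin x) := mul_nonneg hg (mul_sin_nonneg_of_abs_le_pi hx)
  linarith

theorem stmt_7_general
    (y θ : ℝ → ℝ) (k₁ k₂ k₃ w εw : ℝ)
    (hk₂ : 0 < k₂) (hk₃ : 0 < k₃)
    (hy : ∀ t, HasDerivAt y (Real.sin (θ t)) t)
    (hθ : ∀ t, HasDerivAt θ
      (-k₁ * y t * (Real.sin (θ t) / θ t) - k₂ * θ t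
        - k₃ * (1 / (w - y t - εw) + 1 / (w + y t - εw)) * Real.sin (θ t)) t) :
    ∀ t, w - y t - εw > 0 → w + y t - εw > 0 → |θ t| ≤ π / 2 →
      HasDerivAt (fun t => (1/2) * k₁ * (y t)^2 + (1/2) * (θ t)^2)
        (-k₂ * (θ t)^2
          - k₃ * (1 / (w - y t - εw) + 1 / (w + y t - εw))
              * θ t * Real.sin (θ t)) t ∧
      -k₂ * (θ t)^2
        - k₃ * (1 / (w - y t - εw) + 1 / (w + y t - εw))
            * θ t * Real.sin (θ t) ≤ 0 := by
  intro t hL hR hθt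
  have hgain : 0 ≤ k₃ * (1 / (w - y t - εw) + 1 / (w + y t - εw)) := by positivity
  exact ⟨hasDerivAt_lateralLyapunov (hy t) (hθ t),
    lateralLyapunov_dissipation_nonpos hk₂.le hgain (hθt.trans (by linarith [pi_pos]))⟩

/-- Lateral Lyapunov dissipation: along the lateral error dynamics with
barrier feedback, L = (1/2)k₁ỹ² + (1/2)θ̃² satisfies
L' = -k₂θ̃² - k₃(1/d_L + 1/d_R)·θ̃·sin θ̃ ≤ 0 whenever d_L, d_R > 0 and
|θ̃| ≤ π/2. -/
theorem stmt_7
    (y θ : ℝ → ℝ) (k₁ k₂ k₃ w εw : ℝ)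
    (hk₁ : 0 < k₁) (hk₂ : 0 < k₂) (hk₃ : 0 < k₃)
    (hw : εw < w) (hεw : 0 < εw)
    (hy : ∀ t, HasDerivAt y (Real.sin (θ t)) t)
    (hθ : ∀ t, HasDerivAt θ
      (-k₁ * y t * (Real.sin (θ t) / θ t) - k₂ * θ t
        - k₃ * (1 / (w - y t - εw) + 1 / (w + y t - εw)) * Real.sin (θ t)) t) :
    ∀ t, w - y t - εw > 0 → w + y t - εw > 0 → |θ t| ≤ π / 2 →
      HasDerivAt (fun t => (1/2) * k₁ * (y t)^2 + (1/2) * (θ t)^2)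
        (-k₂ * (θ t)^2
          - k₃ * (1 / (w - y t - εw) + 1 / (w + y t - εw))
              * θ t * Real.sin (θ t)) t ∧
      -k₂ * (θ t)^2
        - k₃ * (1 / (w - y t - εw) + 1 / (w + y t - εw))
            * θ t * Real.sin (θ t) ≤ 0 :=
  stmt_7_general y θ k₁ k₂ k₃ w εw hk₂ hk₃ hy hθ
end

section
/- Suppose d : [σ₀, σ_T) → (0,∞) is C², d' and d'' are bounded, and there exists β > 0 such that β·ln(d(σ)/d(σ₀)) = d'(σ) - d'(σ₀) - ∫_{σ₀}^{σ} α(τ)dτ for all σ ∈ [σ₀, σ_T), where α is continuous and bounded and σ_T < ∞. Then inf over [σ₀, σ_T) of d is strictly positive; in particular d cannot converge to 0 as σ → σ_T. -/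
open Real

/-- Integral-identity contradiction argument: if d > 0 on [σ₀, σ_T) with d',
d'' bounded, and β·ln(d(σ)/d(σ₀)) = d'(σ) - d'(σ₀) - ∫_{σ₀}^{σ} α, with α
continuous and bounded and σ_T finite, then inf d > 0 on [σ₀, σ_T). -/
theorem stmt_9
    (d α : ℝ → ℝ) (σ₀ σT β : ℝ) (hσ : σ₀ < σT) (hβ : 0 < β)
    (hd : ContDiffOn ℝ 2 d (Set.Ico σ₀ σT))
    (hpos : ∀ σ ∈ Set.Ico σ₀ σT, d σ > 0)
    (hd' : ∃ M : ℝ, ∀ σ ∈ Set.Ico σ₀ σT, |deriv d σ| ≤ M)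
    (hd'' : ∃ M : ℝ, ∀ σ ∈ Set.Ico σ₀ σT, |deriv (deriv d) σ| ≤ M)
    (hα_cont : Continuous α)
    (hα_bdd : ∃ M : ℝ, ∀ σ ∈ Set.Ico σ₀ σT, |α σ| ≤ M)
    (hid : ∀ σ ∈ Set.Ico σ₀ σT,
      β * Real.log (d σ / d σ₀)
        = deriv d σ - deriv d σ₀ - ∫ τ in σ₀..σ, α τ) :
    ∃ m > (0:ℝ), ∀ σ ∈ Set.Ico σ₀ σT, m ≤ d σ := by
  obtain ⟨M₁, hM₁⟩ := hd'
  obtain ⟨Mα, hMα⟩ := hα_bdd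
  have hmem0 : σ₀ ∈ Set.Ico σ₀ σT := ⟨le_refl _, hσ⟩
  have hd0 : 0 < d σ₀ := hpos σ₀ hmem0
  have hMα0 : 0 ≤ Mα := (abs_nonneg _).trans (hMα σ₀ hmem0)
  set C : ℝ := 2 * M₁ + Mα * (σT - σ₀) with hC
  refine ⟨d σ₀ * Real.exp (-C / β), by positivity, ?_⟩
  intro σ hmem
  obtain ⟨h0σ, hσT⟩ := hmem
  -- bound the integral
  have hint : |∫ τ in σ₀..σ, α τ| ≤ Mα * (σT - σ₀) := by
    have h1 : ‖∫ τ in σ₀..σ, α τ‖ ≤ Mα * |σ - σ₀| := by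
      apply intervalIntegral.norm_integral_le_of_norm_le_const
      intro x hx
      rw [Set.uIoc_of_le h0σ] at hx
      exact hMα x ⟨le_of_lt hx.1, lt_of_le_of_lt hx.2 hσT⟩
    calc |∫ τ in σ₀..σ, α τ| ≤ Mα * |σ - σ₀| := h1
      _ ≤ Mα * (σT - σ₀) := by
          apply mul_le_mul_of_nonneg_left _ hMα0
          rw [abs_of_nonneg (by linarith)]
          linarith
  have hkey : -C ≤ β * Real.log (d σ / d σ₀) := by
    rw [hid σ ⟨h0σ, hσT⟩]
    have h1 : |deriv d σ| ≤ M₁ := hM₁ σ ⟨h0σ, hσT⟩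
    have h2 : |deriv d σ₀| ≤ M₁ := hM₁ σ₀ hmem0
    rw [abs_le] at h1 h2 hint
    linarith [h1.1, h2.2, hint.2]
  have hlog : -C / β ≤ Real.log (d σ / d σ₀) := by
    rw [div_le_iff₀ hβ] at *
    nlinarith
  have hdiv : Real.exp (-C / β) ≤ d σ / d σ₀ := by
    have := Real.exp_le_exp.mpr hlog
    rwa [Real.exp_log (div_pos (hpos σ ⟨h0σ, hσT⟩) hd0)] at this
  calc d σ₀ * Real.exp (-C / β) ≤ d σ₀ * (d σ / d σ₀) :=
        mul_le_mul_of_nonneg_left hdiv hd0.le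
    _ = d σ := by field_simp
end

section
/- Let d : [0,∞) → (0,∞) be C² with d̈ = -k·(ḋ/d) - α(t), k > 0, α continuous, bounded, and converging to a constant α⁰ > 0. If d(t) → 0 as t → ∞, then ḋ/d → -α⁰/k and d̈(t) → 0 as t → ∞. -/
open Filter Set Topology

/-! For every `γ`, the combination `g = ḋ + γ d` satisfies the linear equation
`ġ = -(k / d - γ) g + (k γ - α - γ² d)`. Its damping `k / d - γ` is eventually nonnegative
because `d → 0⁺`, and its forcing tends to `k γ - α₀`. When that limit is negative, `g` is a
barrier: wherever `g ≥ 0` it decreases at a uniform rate, so eventually `g ≤ 0`. Applied to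
`ḋ + γ d` for `γ < α₀ / k` and to `-(ḋ + γ d)` for `γ > α₀ / k`, this traps `ḋ / d` eventually
between `-γ`'s arbitrarily close to `-α₀ / k`; then `d̈ = -k ḋ / d - α → 0`. -/

theorem eventually_nonpos_of_deriv_le_neg {f f' : ℝ → ℝ} {c : ℝ} (hc : 0 < c)
    (hf : ∀ᶠ t in atTop, HasDerivAt f (f' t) t) (hf' : ∀ᶠ t in atTop, 0 ≤ f t → f' t ≤ -c) :
    ∀ᶠ t in atTop, f t ≤ 0 := by
  obtain ⟨T, hT⟩ := eventually_atTop.1 (hf.and hf')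
  have hcont (a b : ℝ) (ha : T ≤ a) : ContinuousOn f (Icc a b) := fun x hx =>
    (hT x (ha.trans hx.1)).1.continuousAt.continuousWithinAt
  have hderiv (a b : ℝ) (ha : T ≤ a) : ∀ x ∈ Ico a b, HasDerivWithinAt f (f' x) (Ici x) x :=
    fun x hx => (hT x (ha.trans hx.1)).1.hasDerivWithinAt
  obtain ⟨t₀, hTt₀, ht₀⟩ : ∃ t₀ ≥ T, f t₀ ≤ 0 := by
    by_contra! hpos
    -- while `f` stays positive it decreases at rate `c`, so it must reach zero by time `b`
    set b := T + f T / c + 1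
    have hTb : T ≤ b := by have := div_pos (hpos T le_rfl) hc; linarith
    have hB : ∀ x, HasDerivAt (fun t => f T - c * (t - T)) (-c) x := fun x => by
      simpa using ((hasDerivAt_id x).sub_const T).const_mul c |>.const_sub (f T)
    have hdecay := image_le_of_deriv_right_le_deriv_boundary (hcont T b le_rfl) (hderiv T b le_rfl)
      (by simp) (fun x _ => (hB x).continuousAt.continuousWithinAt)
      (fun x _ => (hB x).hasDerivWithinAt) (fun x hx => (hT x hx.1).2 (hpos x hx.1).le)
      ⟨hTb, le_rfl⟩
    have : c * (b - T) = f T + c := by simp only [b]; field_simp; ring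
    linarith [hpos b hTb]
  refine eventually_atTop.2 ⟨t₀, fun t ht => ?_⟩
  exact image_le_of_deriv_right_lt_deriv_boundary (hcont t₀ t hTt₀) (hderiv t₀ t hTt₀) (B' := 0)
    ht₀ (fun _ => hasDerivAt_const _ _)
    (fun x hx hfx => ((hT x (hTt₀.trans hx.1)).2 hfx.ge).trans_lt (neg_neg_of_pos hc)) ⟨ht, le_rfl⟩

theorem eventually_nonpos_of_hasDerivAt_eq_neg_mul_add {f a b : ℝ → ℝ} {L : ℝ} (hL : L < 0)
    (hf : ∀ᶠ t in atTop, HasDerivAt f (-a t * f t + b t) t) (ha : ∀ᶠ t in atTop, 0 ≤ a t)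
    (hb : Tendsto b atTop (𝓝 L)) :
    ∀ᶠ t in atTop, f t ≤ 0 := by
  refine eventually_nonpos_of_deriv_le_neg (c := -L / 2) (by linarith) hf ?_
  filter_upwards [ha, hb.eventually (gt_mem_nhds (by linarith : L < L / 2))] with t hat hbt hft
  nlinarith [mul_nonneg hat hft]

theorem eventually_le_div_of_tendsto_zero {l : Filter ℝ} {d : ℝ → ℝ} {k : ℝ} (hk : 0 < k)
    (hpos : ∀ᶠ t in l, 0 < d t) (hlim : Tendsto d l (𝓝 0)) (γ : ℝ) :
    ∀ᶠ t in l, γ ≤ k / d t := by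
  have hinv : Tendsto (fun t => (d t)⁻¹) l atTop :=
    (tendsto_nhdsWithin_iff.2 ⟨hlim, hpos⟩).inv_tendsto_nhdsGT_zero
  simpa [div_eq_mul_inv] using (hinv.const_mul_atTop hk).eventually_ge_atTop γ

section DampedFlow

variable {d α : ℝ → ℝ} {k : ℝ}

theorem eventually_hasDerivAt_deriv_add_mul (hd : ContDiff ℝ 2 d) (hpos : ∀ᶠ t in atTop, 0 < d t)
    (hode : ∀ᶠ t in atTop, deriv (deriv d) t = -k * (deriv d t / d t) - α t) (γ : ℝ) :
    ∀ᶠ t in atTop, HasDerivAt (fun s => deriv d s + γ * d s)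
      (-(k / d t - γ) * (deriv d t + γ * d t) + (k * γ - α t - γ ^ 2 * d t)) t := by
  have hd' : ContDiff ℝ 1 (deriv d) := hd.iterate_deriv' 1 1
  filter_upwards [hpos, hode] with t hdt hodet
  refine ((hd'.differentiable one_ne_zero t).hasDerivAt.add
    ((hd.differentiable two_ne_zero t).hasDerivAt.const_mul γ)).congr_deriv ?_
  rw [hodet]
  field_simp
  ring

theorem tendsto_deriv_div_of_tendsto_zero {α₀ : ℝ} (hk : 0 < k) (hd : ContDiff ℝ 2 d)
    (hpos : ∀ᶠ t in atTop, 0 < d t)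
    (hode : ∀ᶠ t in atTop, deriv (deriv d) t = -k * (deriv d t / d t) - α t)
    (hlim : Tendsto d atTop (𝓝 0)) (hα_lim : Tendsto α atTop (𝓝 α₀)) :
    Tendsto (fun t => deriv d t / d t) atTop (𝓝 (-α₀ / k)) := by
  have hg := eventually_hasDerivAt_deriv_add_mul hd hpos hode
  have hcoef (γ : ℝ) : ∀ᶠ t in atTop, 0 ≤ k / d t - γ :=
    (eventually_le_div_of_tendsto_zero hk hpos hlim γ).mono fun _ => sub_nonneg.2
  have hforce (γ : ℝ) :
      Tendsto (fun t => k * γ - α t - γ ^ 2 * d t) atTop (𝓝 (k * γ - α₀)) := by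
    simpa using (tendsto_const_nhds.sub hα_lim).sub (hlim.const_mul (γ ^ 2))
  refine tendsto_order.2 ⟨fun a ha => ?_, fun b hb => ?_⟩
  · obtain ⟨a', haa', ha'⟩ := exists_between ha
    have hL : -(k * -a' - α₀) < 0 := by
      rw [lt_div_iff₀ hk] at ha'
      linarith
    have hneg := eventually_nonpos_of_hasDerivAt_eq_neg_mul_add hL
      ((hg (-a')).mono fun t h => h.fun_neg.congr_deriv (by ring)) (hcoef (-a')) (hforce (-a')).neg
    filter_upwards [hneg, hpos] with t h hdt
    exact haa'.trans_le ((le_div_iff₀ hdt).2 (by linarith))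
  · obtain ⟨b', hb', hbb'⟩ := exists_between hb
    have hL : k * -b' - α₀ < 0 := by
      rw [div_lt_iff₀ hk] at hb'
      linarith
    filter_upwards [eventually_nonpos_of_hasDerivAt_eq_neg_mul_add hL (hg (-b')) (hcoef (-b'))
      (hforce (-b')), hpos] with t h hdt
    exact ((div_le_iff₀ hdt).2 (by linarith)).trans_lt hbb'

end DampedFlow

theorem stmt_16_general
    (d α : ℝ → ℝ) (k α₀ : ℝ) (hk : 0 < k)
    (hd : ContDiff ℝ 2 d)
    (hpos : ∀ t ≥ (0:ℝ), d t > 0)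
    (hα_lim : Tendsto α atTop (nhds α₀))
    (hode : ∀ t ≥ (0:ℝ),
      deriv (deriv d) t = -k * (deriv d t / d t) - α t)
    (hlim : Tendsto d atTop (nhds 0)) :
    Tendsto (fun t => deriv d t / d t) atTop (nhds (-α₀ / k)) ∧
    Tendsto (fun t => deriv (deriv d) t) atTop (nhds 0) := by
  have hode' := eventually_atTop.2 ⟨0, hode⟩
  have hφ := tendsto_deriv_div_of_tendsto_zero hk hd (eventually_atTop.2 ⟨0, hpos⟩) hode' hlim
    hα_lim
  refine ⟨hφ, ?_⟩
  have hdd := (hφ.const_mul (-k)).sub hα_lim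
  rw [show -k * (-α₀ / k) - α₀ = 0 by field_simp; ring] at hdd
  exact hdd.congr' (hode'.mono fun _ h => h.symm)

/-- If d > 0 is C² with d̈ = -k(ḋ/d) - α, α continuous, bounded, and
converging to α⁰ > 0, and d(t) → 0, then ḋ/d → -α⁰/k and d̈ → 0. -/
theorem stmt_16
    (d α : ℝ → ℝ) (k α₀ : ℝ) (hk : 0 < k) (hα₀ : 0 < α₀)
    (hd : ContDiff ℝ 2 d)
    (hpos : ∀ t ≥ (0:ℝ), d t > 0)
    (hα_cont : Continuous α)
    (hα_bdd : ∃ M : ℝ, ∀ t ≥ (0:ℝ), |α t| ≤ M)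
    (hα_lim : Tendsto α atTop (nhds α₀))
    (hode : ∀ t ≥ (0:ℝ),
      deriv (deriv d) t = -k * (deriv d t / d t) - α t)
    (hlim : Tendsto d atTop (nhds 0)) :
    Tendsto (fun t => deriv d t / d t) atTop (nhds (-α₀ / k)) ∧
    Tendsto (fun t => deriv (deriv d) t) atTop (nhds 0) :=
  stmt_16_general d α k α₀ hk hd hpos hα_lim hode hlim
end
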